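/- arXiv:1606.05971 — 6 statements merged into one kernel-verified Lean document; each statement's English description precedes it below -/
import Mathlib

section
/- If a positive integer n can be written as a sum of two squares in two essentially different ways, n = a² + b² = c² + d² with (a,b) not equal to (c,d) up to signs and swapping, and b ≠ d, then n · 4(b-d)² = ((a-c)² + (b-d)²) · ((a+c)² + (b-d)²). -/
theorem euler_two_representations (n a b c d : ℤ) (hn : 0 < n)
    (hab : a ^ 2 + b ^ 2 = n) (hcd : c ^ 2 + d ^ 2 = n)
    (hbd : b ≠ d)
    (hdiff : ¬ ((|a| = |c| ∧ |b| = |d|) ∨ (|a| = |d| ∧ |b| = |c|))) :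
    n * (4 * (b - d) ^ 2) =
      ((a - c) ^ 2 + (b - d) ^ 2) * ((a + c) ^ 2 + (b - d) ^ 2) := by
  linear_combination (-(a^2+b^2-c^2-d^2) - 2*(d^2-b^2) - 2*(b-d)^2) * hab + ((a^2+b^2-c^2-d^2) + 2*(d^2-b^2) - 2*(b-d)^2) * hcd
end

section
/- Every rational integer prime p, viewed as an element of the quaternions, is not irreducible in the ring of Hurwitz integers; i.e., p factors into quaternion primes. -/
/-- A Lipschitz integer: a quaternion with all coordinates in ℤ. -/
def IsLipschitzInt (x : Quaternion ℚ) : Prop :=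
  ∃ a b c d : ℤ, x = ⟨(a : ℚ), (b : ℚ), (c : ℚ), (d : ℚ)⟩

/-- A half-integer Hurwitz integer: all coordinates in ℤ + 1/2. -/
def IsHalfInt (x : Quaternion ℚ) : Prop :=
  ∃ a b c d : ℤ, x = ⟨(a : ℚ) + 1/2, (b : ℚ) + 1/2, (c : ℚ) + 1/2, (d : ℚ) + 1/2⟩

/-- A Hurwitz integer. -/
def IsHurwitzInt (x : Quaternion ℚ) : Prop := IsLipschitzInt x ∨ IsHalfInt x

/-!
By Lagrange's four-square theorem `p = a² + b² + c² + d²`, so `x = a + bi + cj + dk` is a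
Lipschitz integer with `x * x̄ = N(x) = p`. Both factors have norm `p ≠ 1`.
-/

theorem IsLipschitzInt.star {x : Quaternion ℚ} (hx : IsLipschitzInt x) :
    IsLipschitzInt (star x) := by
  obtain ⟨a, b, c, d, hx⟩ := hx
  refine ⟨a, -b, -c, -d, ?_⟩
  -- `star` must be computed before substituting `hx`: the literal on its right-hand side is
  -- typed as a `QuaternionAlgebra`, where the `Quaternion.*_star` lemmas no longer match.
  ext <;> simp only [Quaternion.re_star, Quaternion.imI_star, Quaternion.imJ_star,
    Quaternion.imK_star] <;> simp [hx]

theorem exists_isLipschitzInt_normSq_eq (n : ℕ) :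
    ∃ x : Quaternion ℚ, IsLipschitzInt x ∧ Quaternion.normSq x = n := by
  obtain ⟨a, b, c, d, h⟩ := Nat.sum_four_squares n
  let x : Quaternion ℚ := ⟨a, b, c, d⟩
  refine ⟨x, ⟨a, b, c, d, by push_cast; rfl⟩, ?_⟩
  rw [Quaternion.normSq_def' x, ← h]
  push_cast
  ring

/-- Every rational prime, viewed inside the quaternions, factors into two
Hurwitz integers, neither of which is a unit (i.e. neither has norm 1): it is
not irreducible in the ring of Hurwitz integers. -/
theorem rational_prime_not_irreducible_in_hurwitz (p : ℕ) (hp : p.Prime) :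
    ∃ x y : Quaternion ℚ, IsHurwitzInt x ∧ IsHurwitzInt y ∧
      Quaternion.normSq x ≠ 1 ∧ Quaternion.normSq y ≠ 1 ∧
      x * y = (p : Quaternion ℚ) := by
  obtain ⟨x, hx, hnorm⟩ := exists_isLipschitzInt_normSq_eq p
  have hp_ne_one : (p : ℚ) ≠ 1 := by exact_mod_cast hp.ne_one
  refine ⟨x, star x, Or.inl hx, Or.inl hx.star, ?_, ?_, ?_⟩
  · rwa [hnorm]
  · rwa [Quaternion.normSq_star, hnorm]
  · rw [Quaternion.self_mul_star, hnorm]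
    norm_cast
end

section
/- The Gaussian integer 4 + 13i cannot be written as a sum of two Gaussian primes. -/
open Zsqrtd

namespace Gauss413

lemma norm_def' (z : GaussianInt) : z.norm = z.re * z.re + z.im * z.im := by
  rw [Zsqrtd.norm_def]; ring

lemma not_unit_of_norm {z : GaussianInt} (h : z.norm ≠ 1) : ¬ IsUnit z := by
  intro hu
  exact h ((Zsqrtd.norm_eq_one_iff' (by norm_num) z).mpr hu)

lemma unit_cases {u : GaussianInt} (hu : IsUnit u) :
    u = ⟨1,0⟩ ∨ u = ⟨-1,0⟩ ∨ u = ⟨0,1⟩ ∨ u = ⟨0,-1⟩ := by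
  have h1 : u.norm = 1 := (Zsqrtd.norm_eq_one_iff' (by norm_num) u).mpr hu
  rw [norm_def'] at h1
  have ha1 : -1 ≤ u.re := by nlinarith [mul_self_nonneg u.im]
  have ha2 : u.re ≤ 1 := by nlinarith [mul_self_nonneg u.im]
  have hb1 : -1 ≤ u.im := by nlinarith [mul_self_nonneg u.re]
  have hb2 : u.im ≤ 1 := by nlinarith [mul_self_nonneg u.re]
  have ha : u.re = 1 ∨ u.re = -1 ∨ u.re = 0 := by omega
  have hb : u.im = 1 ∨ u.im = -1 ∨ u.im = 0 := by omega
  have key : ∀ z : GaussianInt, u.re = z.re → u.im = z.im → u = z := by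
    intro z h1 h2; exact Zsqrtd.ext_iff.mpr ⟨h1, h2⟩
  rcases ha with h|h|h <;> rcases hb with h'|h'|h' <;>
    rw [h, h'] at h1 <;> first
      | (exact Or.inl (key _ h h'))
      | (exact Or.inr (Or.inl (key _ h h')))
      | (exact Or.inr (Or.inr (Or.inl (key _ h h'))))
      | (exact Or.inr (Or.inr (Or.inr (key _ h h'))))
      | omega

lemma irred_one_add_I : Irreducible (⟨1,1⟩ : GaussianInt) := by
  constructor
  · exact not_unit_of_norm (by simp [norm_def'])
  · intro a b hab
    have hn : a.norm * b.norm = 2 := by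
      rw [← Zsqrtd.norm_mul, ← hab]; simp [norm_def']
    have ha := GaussianInt.norm_nonneg a
    have hb := GaussianInt.norm_nonneg b
    have hd : a.norm ∣ 2 := ⟨b.norm, hn.symm⟩
    have hle : a.norm ≤ 2 := Int.le_of_dvd (by norm_num) hd
    have : a.norm = 1 ∨ b.norm = 1 := by
      interval_cases h : a.norm <;> omega
    rcases this with h | h
    · left; exact (Zsqrtd.norm_eq_one_iff' (by norm_num) a).mp h
    · right; exact (Zsqrtd.norm_eq_one_iff' (by norm_num) b).mp h

end Gauss413

namespace Gauss413

set_option synthInstance.maxHeartbeats 1000000 in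
lemma one_add_I_dvd {p : GaussianInt} (h : 2 ∣ p.norm) : (⟨1,1⟩ : GaussianInt) ∣ p := by
  have hprime : Prime (⟨1,1⟩ : GaussianInt) := irreducible_iff_prime.mp irred_one_add_I
  have h2 : (⟨1,1⟩ : GaussianInt) ∣ ((2 : ℤ) : GaussianInt) := by
    refine ⟨⟨1,-1⟩, ?_⟩
    refine Zsqrtd.ext_iff.mpr ⟨?_, ?_⟩ <;> simp [Zsqrtd.re_mul, Zsqrtd.im_mul]
  have h3 : (⟨1,1⟩ : GaussianInt) ∣ (p.norm : GaussianInt) :=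
    h2.trans (map_dvd (Int.castRingHom GaussianInt) h)
  rw [Zsqrtd.norm_eq_mul_conj] at h3
  rcases hprime.dvd_or_dvd h3 with h4 | h4
  · exact h4
  · obtain ⟨c, hc⟩ := h4
    refine ⟨⟨0,-1⟩ * star c, ?_⟩
    have := congrArg star hc
    rw [star_star, star_mul] at this
    rw [this]
    refine Zsqrtd.ext_iff.mpr ⟨?_, ?_⟩ <;>
      simp [Zsqrtd.re_mul, Zsqrtd.im_mul] <;> ring

lemma case_even {p q : GaussianInt} (hp : Irreducible p) (hq : Irreducible q)
    (hpq : p + q = (⟨4, 13⟩ : GaussianInt)) (he : 2 ∣ p.norm) : False := by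
  obtain ⟨c, hc⟩ := one_add_I_dvd he
  rcases hp.isUnit_or_isUnit hc with hu | hu
  · exact not_unit_of_norm (by simp [norm_def']) hu
  have hre : p.re + q.re = 4 := by
    have := congrArg Zsqrtd.re hpq; simpa using this
  have him : p.im + q.im = 13 := by
    have := congrArg Zsqrtd.im hpq; simpa using this
  have mulv : ∀ a b x y : ℤ, (⟨1,1⟩ : GaussianInt) * ⟨a,b⟩ = ⟨a - b, a + b⟩ := by
    intro a b x y
    refine Zsqrtd.ext_iff.mpr ⟨?_, ?_⟩ <;> simp [Zsqrtd.re_mul, Zsqrtd.im_mul] <;> ring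
  have qval : ∀ x y : ℤ, p = ⟨x, y⟩ → q = ⟨4 - x, 13 - y⟩ := by
    intro x y hxy
    rw [hxy] at hre him
    refine Zsqrtd.ext_iff.mpr ⟨?_, ?_⟩ <;> simp at hre him ⊢ <;> omega
  have notirr : ∀ x y u v a b : ℤ, q = ⟨x,y⟩ →
      (⟨x,y⟩ : GaussianInt) = ⟨u,v⟩ * ⟨a,b⟩ → u*u+v*v ≠ 1 → a*a+b*b ≠ 1 → False := by
    intro x y u v a b hqv heq h1 h2
    rcases hq.isUnit_or_isUnit (hqv.trans heq) with h | h
    · exact not_unit_of_norm (by rw [norm_def']; exact h1) h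
    · exact not_unit_of_norm (by rw [norm_def']; exact h2) h
  rcases unit_cases hu with h|h|h|h <;> rw [h, mulv _ _ 0 0] at hc <;> norm_num at hc
  · -- p = ⟨1,1⟩, q = ⟨3,12⟩ = ⟨3,0⟩*⟨1,4⟩
    refine notirr 3 12 3 0 1 4 (qval _ _ hc) ?_ (by norm_num) (by norm_num)
    refine Zsqrtd.ext_iff.mpr ⟨?_, ?_⟩ <;> simp [Zsqrtd.re_mul, Zsqrtd.im_mul]
  · -- p = ⟨-1,-1⟩, q = ⟨5,14⟩ = ⟨3,-2⟩*⟨-1,4⟩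
    refine notirr 5 14 3 (-2) (-1) 4 (qval _ _ hc) ?_ (by norm_num) (by norm_num)
    refine Zsqrtd.ext_iff.mpr ⟨?_, ?_⟩ <;> simp [Zsqrtd.re_mul, Zsqrtd.im_mul] <;> norm_num
  · -- p = ⟨-1,1⟩, q = ⟨5,12⟩ = ⟨3,2⟩*⟨3,2⟩
    refine notirr 5 12 3 2 3 2 (qval _ _ hc) ?_ (by norm_num) (by norm_num)
    refine Zsqrtd.ext_iff.mpr ⟨?_, ?_⟩ <;> simp [Zsqrtd.re_mul, Zsqrtd.im_mul] <;> norm_num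
  · -- p = ⟨1,-1⟩, q = ⟨3,14⟩ = ⟨2,1⟩*⟨4,5⟩
    refine notirr 3 14 2 1 4 5 (qval _ _ hc) ?_ (by norm_num) (by norm_num)
    refine Zsqrtd.ext_iff.mpr ⟨?_, ?_⟩ <;> simp [Zsqrtd.re_mul, Zsqrtd.im_mul] <;> norm_num

end Gauss413

theorem not_sum_two_gaussian_primes_4_13 :
    ¬ ∃ p q : GaussianInt, Irreducible p ∧ Irreducible q ∧
        p + q = (⟨4, 13⟩ : GaussianInt) := by
  rintro ⟨p, q, hp, hq, hpq⟩
  have hre : p.re + q.re = 4 := by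
    have := congrArg Zsqrtd.re hpq; simpa using this
  have him : p.im + q.im = 13 := by
    have := congrArg Zsqrtd.im hpq; simpa using this
  have key : ∃ K, p.norm + q.norm = 2 * K + 185 := by
    refine ⟨p.re*p.re - 4*p.re + p.im*p.im - 13*p.im, ?_⟩
    have e1 : q.re = 4 - p.re := by omega
    have e2 : q.im = 13 - p.im := by omega
    rw [Gauss413.norm_def', Gauss413.norm_def', e1, e2]; ring
  obtain ⟨K, hK⟩ := key
  have : 2 ∣ p.norm ∨ 2 ∣ q.norm := by omega
  rcases this with h | h
  · exact Gauss413.case_even hp hq hpq h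
  · exact Gauss413.case_even hq hp (by rw [add_comm]; exact hpq) h
end

section
/- For every integer a, there exist integers x, y, z such that a² + x² + y² + z² is a rational prime. -/
/-- `good a b c d e f` : the ternary quadratic form a x²+b y²+c z²+2d xy+2e xz+2f yz
is the Gram form of three integer vectors. -/
def good (a b c d e f : ℤ) : Prop :=
  ∃ p1 p2 p3 q1 q2 q3 r1 r2 r3 : ℤ,
    a = p1^2+p2^2+p3^2 ∧ b = q1^2+q2^2+q3^2 ∧ c = r1^2+r2^2+r3^2 ∧
    d = p1*q1+p2*q2+p3*q3 ∧ e = p1*r1+p2*r2+p3*r3 ∧ f = q1*r1+q2*r2+q3*r3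

lemma good_swap_xy {a b c d e f : ℤ} (h : good b a c d f e) : good a b c d e f := by
  obtain ⟨p1,p2,p3,q1,q2,q3,r1,r2,r3,h1,h2,h3,h4,h5,h6⟩ := h
  exact ⟨q1,q2,q3,p1,p2,p3,r1,r2,r3, h2, h1, h3, by linarith [h4], h6, h5⟩

lemma good_swap_yz {a b c d e f : ℤ} (h : good a c b e d f) : good a b c d e f := by
  obtain ⟨p1,p2,p3,q1,q2,q3,r1,r2,r3,h1,h2,h3,h4,h5,h6⟩ := h
  exact ⟨p1,p2,p3,r1,r2,r3,q1,q2,q3, h1, h3, h2, h5, h4, by linarith [h6]⟩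

lemma good_flip_x {a b c d e f : ℤ} (h : good a b c (-d) (-e) f) : good a b c d e f := by
  obtain ⟨p1,p2,p3,q1,q2,q3,r1,r2,r3,h1,h2,h3,h4,h5,h6⟩ := h
  exact ⟨-p1,-p2,-p3,q1,q2,q3,r1,r2,r3, by linarith [h1], h2, h3,
    by linarith [h4], by linarith [h5], h6⟩

lemma good_flip_y {a b c d e f : ℤ} (h : good a b c (-d) e (-f)) : good a b c d e f := by
  obtain ⟨p1,p2,p3,q1,q2,q3,r1,r2,r3,h1,h2,h3,h4,h5,h6⟩ := h
  exact ⟨p1,p2,p3,-q1,-q2,-q3,r1,r2,r3, h1, by linarith [h2], h3,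
    by linarith [h4], h5, by linarith [h6]⟩

lemma good_flip_z {a b c d e f : ℤ} (h : good a b c d (-e) (-f)) : good a b c d e f := by
  obtain ⟨p1,p2,p3,q1,q2,q3,r1,r2,r3,h1,h2,h3,h4,h5,h6⟩ := h
  exact ⟨p1,p2,p3,q1,q2,q3,-r1,-r2,-r3, h1, h2, by linarith [h3],
    h4, by linarith [h5], by linarith [h6]⟩

/-- substitution (x,y,z) ↦ (x+ky, y, z) : reduces b using a. -/
lemma good_shear_b {a b c d e f : ℤ} (k : ℤ)
    (h : good a (a*k^2 + 2*d*k + b) c (d + a*k) e (f + e*k)) : good a b c d e f := by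
  obtain ⟨p1,p2,p3,q1,q2,q3,r1,r2,r3,h1,h2,h3,h4,h5,h6⟩ := h
  refine ⟨p1,p2,p3,q1-k*p1,q2-k*p2,q3-k*p3,r1,r2,r3, h1, ?_, h3, ?_, h5, ?_⟩
  · linear_combination h2 - 2*k*h4 + k^2*h1
  · linear_combination h4 - k*h1
  · linear_combination h6 - k*h5

/-- substitution (x,y,z) ↦ (x, y+kx, z) : reduces a using b. -/
lemma good_shear_a {a b c d e f : ℤ} (k : ℤ)
    (h : good (b*k^2 + 2*d*k + a) b c (d + b*k) (e + f*k) f) : good a b c d e f := by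
  obtain ⟨p1,p2,p3,q1,q2,q3,r1,r2,r3,h1,h2,h3,h4,h5,h6⟩ := h
  refine ⟨p1-k*q1,p2-k*q2,p3-k*q3,q1,q2,q3,r1,r2,r3, ?_, h2, h3, ?_, ?_, h6⟩
  · linear_combination h1 - 2*k*h4 + k^2*h2
  · linear_combination h4 - k*h2
  · linear_combination h5 - k*h6

/-- substitution (x,y,z) ↦ (x+kz, y, z) : reduces c using a. -/
lemma good_shear_c1 {a b c d e f : ℤ} (k : ℤ)
    (h : good a b (a*k^2 + 2*e*k + c) d (e + a*k) (f + d*k)) : good a b c d e f := by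
  obtain ⟨p1,p2,p3,q1,q2,q3,r1,r2,r3,h1,h2,h3,h4,h5,h6⟩ := h
  refine ⟨p1,p2,p3,q1,q2,q3,r1-k*p1,r2-k*p2,r3-k*p3, h1, h2, ?_, h4, ?_, ?_⟩
  · linear_combination h3 - 2*k*h5 + k^2*h1
  · linear_combination h5 - k*h1
  · linear_combination h6 - k*h4

/-- substitution (x,y,z) ↦ (x, y, z+kx) : reduces a using c. -/
lemma good_shear_a2 {a b c d e f : ℤ} (k : ℤ)
    (h : good (c*k^2 + 2*e*k + a) b c (d + f*k) (e + c*k) f) : good a b c d e f := by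
  obtain ⟨p1,p2,p3,q1,q2,q3,r1,r2,r3,h1,h2,h3,h4,h5,h6⟩ := h
  refine ⟨p1-k*r1,p2-k*r2,p3-k*r3,q1,q2,q3,r1,r2,r3, ?_, h2, h3, ?_, ?_, h6⟩
  · linear_combination h1 - 2*k*h5 + k^2*h3
  · linear_combination h4 - k*h6
  · linear_combination h5 - k*h3

/-- substitution (x,y,z) ↦ (x, y+kz, z) : reduces c using b. -/
lemma good_shear_c2 {a b c d e f : ℤ} (k : ℤ)
    (h : good a b (b*k^2 + 2*f*k + c) d (e + d*k) (f + b*k)) : good a b c d e f := by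
  obtain ⟨p1,p2,p3,q1,q2,q3,r1,r2,r3,h1,h2,h3,h4,h5,h6⟩ := h
  refine ⟨p1,p2,p3,q1,q2,q3,r1-k*q1,r2-k*q2,r3-k*q3, h1, h2, ?_, h4, ?_, ?_⟩
  · linear_combination h3 - 2*k*h6 + k^2*h2
  · linear_combination h5 - k*h4
  · linear_combination h6 - k*h2

/-- substitution (x,y,z) ↦ (x, y, z+ky) : reduces b using c. -/
lemma good_shear_b2 {a b c d e f : ℤ} (k : ℤ)
    (h : good a (c*k^2 + 2*f*k + b) c (d + e*k) e (f + c*k)) : good a b c d e f := by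
  obtain ⟨p1,p2,p3,q1,q2,q3,r1,r2,r3,h1,h2,h3,h4,h5,h6⟩ := h
  refine ⟨p1,p2,p3,q1-k*r1,q2-k*r2,q3-k*r3,r1,r2,r3, h1, ?_, h3, ?_, h5, ?_⟩
  · linear_combination h2 - 2*k*h6 + k^2*h3
  · linear_combination h4 - k*h5
  · linear_combination h6 - k*h3

/-- substitution (x,y,z) ↦ (x+z, y+z, z) : replaces c by Q(1,1,1). -/
lemma good_skew_c {a b c d e f : ℤ}
    (h : good a b (a+b+c+2*d+2*e+2*f) d (a+d+e) (b+d+f)) : good a b c d e f := by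
  obtain ⟨p1,p2,p3,q1,q2,q3,r1,r2,r3,h1,h2,h3,h4,h5,h6⟩ := h
  refine ⟨p1,p2,p3,q1,q2,q3,r1-p1-q1,r2-p2-q2,r3-p3-q3, h1, h2, ?_, h4, ?_, ?_⟩
  · linear_combination h3 - 2*h5 - 2*h6 + h1 + h2 + 2*h4
  · linear_combination h5 - h1 - h4
  · linear_combination h6 - h4 - h2

/-- substitution (x,y,z) ↦ (x+y, y, z+y) : replaces b by Q(1,1,1). -/
lemma good_skew_b {a b c d e f : ℤ}
    (h : good a (a+b+c+2*d+2*e+2*f) c (a+d+e) e (c+e+f)) : good a b c d e f := by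
  obtain ⟨p1,p2,p3,q1,q2,q3,r1,r2,r3,h1,h2,h3,h4,h5,h6⟩ := h
  refine ⟨p1,p2,p3,q1-p1-r1,q2-p2-r2,q3-p3-r3,r1,r2,r3, h1, ?_, h3, ?_, h5, ?_⟩
  · linear_combination h2 - 2*h4 - 2*h6 + h1 + h3 + 2*h5
  · linear_combination h4 - h1 - h5
  · linear_combination h6 - h5 - h3

/-- substitution (x,y,z) ↦ (x, y+x, z+x) : replaces a by Q(1,1,1). -/
lemma good_skew_a {a b c d e f : ℤ}
    (h : good (a+b+c+2*d+2*e+2*f) b c (b+d+f) (c+e+f) f) : good a b c d e f := by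
  obtain ⟨p1,p2,p3,q1,q2,q3,r1,r2,r3,h1,h2,h3,h4,h5,h6⟩ := h
  refine ⟨p1-q1-r1,p2-q2-r2,p3-q3-r3,q1,q2,q3,r1,r2,r3, ?_, h2, h3, ?_, ?_, h6⟩
  · linear_combination h1 - 2*h4 - 2*h5 + h2 + h3 + 2*h6
  · linear_combination h4 - h2 - h6
  · linear_combination h5 - h6 - h3



lemma redI {a b c d e f : ℤ} (ha : 1 ≤ a) (hab : a ≤ b) (hbc : b ≤ c)
    (hd : 0 ≤ d) (he : 0 ≤ e) (hf : 0 ≤ f)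
    (hd1 : 2*d ≤ a) (he1 : 2*e ≤ a) (hf1 : 2*f ≤ b)
    (hdet : a*b*c + 2*d*e*f - a*f^2 - b*e^2 - c*d^2 = 1) :
    a*b*c ≤ 2 := by
  have hA : 0 ≤ a*b - 2*d^2 - 2*e^2 := by
    nlinarith [mul_nonneg hd (sub_nonneg.mpr hd1), mul_nonneg he (sub_nonneg.mpr he1),
      mul_nonneg (by linarith : (0:ℤ) ≤ a) (by linarith : 0 ≤ b - d - e)]
  have hB : 0 ≤ a*b + 4*d*e - 4*d^2 - 4*e^2 := by
    rcases le_total d e with h | h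
    · nlinarith [mul_le_mul he1 he1 (by linarith) (by linarith),
        mul_nonneg he (by linarith : 0 ≤ e - d)]
    · nlinarith [mul_le_mul hd1 hd1 (by linarith) (by linarith),
        mul_nonneg hd (by linarith : 0 ≤ d - e)]
  have h1 : 0 ≤ 2*(b - 2*f)*(b*(a*b - 2*d^2 - 2*e^2)) :=
    mul_nonneg (by linarith) (mul_nonneg (by linarith) hA)
  have h2 : 0 ≤ 2*f*(b*(a*b + 4*d*e - 4*d^2 - 4*e^2)) :=
    mul_nonneg (by linarith) (mul_nonneg (by linarith) hB)
  have h3 : 0 ≤ 2*a*b*f*(b - 2*f) :=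
    mul_nonneg (mul_nonneg (mul_nonneg (by linarith) (by linarith)) hf) (by linarith)
  have hid : 2*b*(b*(a*b - 2*d^2) + 4*d*e*f - 2*a*f^2 - 2*b*e^2) =
      2*(b - 2*f)*(b*(a*b - 2*d^2 - 2*e^2)) + 2*f*(b*(a*b + 4*d*e - 4*d^2 - 4*e^2))
      + 2*a*b*f*(b - 2*f) := by ring
  have key : 0 ≤ 2*b*(b*(a*b - 2*d^2) + 4*d*e*f - 2*a*f^2 - 2*b*e^2) := by
    rw [hid]; linarith
  have hP1 : 0 ≤ b*(a*b - 2*d^2) + 4*d*e*f - 2*a*f^2 - 2*b*e^2 := by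
    rcases lt_or_ge (b*(a*b - 2*d^2) + 4*d*e*f - 2*a*f^2 - 2*b*e^2) 0 with h | h
    · exfalso
      have : 2*b*(b*(a*b - 2*d^2) + 4*d*e*f - 2*a*f^2 - 2*b*e^2) < 0 :=
        mul_neg_of_pos_of_neg (by linarith) h
      linarith
    · exact h
  have h4 : 0 ≤ (c - b)*(a*b - 2*d^2) := by
    have h5 : 0 ≤ a*b - 2*d^2 := by nlinarith
    exact mul_nonneg (by linarith) h5
  have hfin : a*b*c + (b*(a*b - 2*d^2) + 4*d*e*f - 2*a*f^2 - 2*b*e^2)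
      + (c - b)*(a*b - 2*d^2) = 2 := by linear_combination 2*hdet
  linarith

lemma redII {a b c d e f : ℤ} (ha : 1 ≤ a) (hab : a ≤ b) (hbc : b ≤ c)
    (hd : d ≤ 0) (he : e ≤ 0) (hf : f ≤ 0)
    (hd1 : 2*(-d) ≤ a) (he1 : 2*(-e) ≤ a) (hf1 : 2*(-f) ≤ b)
    (hex : 0 ≤ a + b + 2*(d+e+f))
    (hdet : a*b*c + 2*d*e*f - a*f^2 - b*e^2 - c*d^2 = 1) :
    a*b*c ≤ 2 := by
  obtain ⟨D, rfl⟩ : ∃ D, d = -D := ⟨-d, by ring⟩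
  obtain ⟨E, rfl⟩ : ∃ E, e = -E := ⟨-e, by ring⟩
  obtain ⟨F, rfl⟩ : ∃ F, f = -F := ⟨-f, by ring⟩
  have hD0 : 0 ≤ D := by linarith
  have hE0 : 0 ≤ E := by linarith
  have hF0 : 0 ≤ F := by linarith
  have hd1' : 2*D ≤ a := by linarith
  have he1' : 2*E ≤ a := by linarith
  have hf1' : 2*F ≤ b := by linarith
  have hex' : 2*(D+E+F) ≤ a + b := by linarith
  have hdet' : a*b*c - 2*D*E*F - a*F^2 - b*E^2 - c*D^2 = 1 := by linear_combination hdet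
  -- s1 : -2aF² ≥ -abF
  have s1 : 0 ≤ a*F*(b - 2*F) := mul_nonneg (mul_nonneg (by linarith) hF0) (by linarith)
  have s2 : 0 ≤ (a*b + 4*D*E)*((a + b - 2*D - 2*E) - 2*F) :=
    mul_nonneg (by nlinarith [mul_nonneg hD0 hE0]) (by linarith)
  -- G' ≥ 0
  have hG : 0 ≤ 2*(a*b^2 - 2*b*D^2 - 2*b*E^2) - (a*b + 4*D*E)*(a + b - 2*D - 2*E) := by
    rcases le_total (2*(D+E)) a with hs | hs
    · have t1 : 0 ≤ a*b*(b-a) := mul_nonneg (mul_nonneg (by linarith) (by linarith)) (by linarith)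
      have t2 : 0 ≤ 2*b*(D+E)*(a - 2*(D+E)) :=
        mul_nonneg (mul_nonneg (by linarith) (by linarith)) (by linarith)
      have t3 : 0 ≤ 2*D*E*(2*(b-a) + 4*(D+E)) :=
        mul_nonneg (mul_nonneg (mul_nonneg (by norm_num) hD0) hE0) (by linarith)
      have hid1 : 2*(a*b^2 - 2*b*D^2 - 2*b*E^2) - (a*b + 4*D*E)*(a + b - 2*D - 2*E)
          = a*b*(b-a) + 2*b*(D+E)*(a - 2*(D+E)) + 2*D*E*(2*(b-a) + 4*(D+E)) := by ring
      rw [hid1]; linarith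
    · have hsa : D + E ≤ a := by linarith
      have t1 : 0 ≤ 2*a*(b-a)^2 := by positivity
      have t2 : 0 ≤ 8*(D+E)*(a-(D+E))*(b-a) :=
        mul_nonneg (mul_nonneg (by linarith) (by linarith)) (by linarith)
      have t3 : 0 ≤ (a-2*D)*(a-2*E)*(2*(b-a)+4*(D+E)) :=
        mul_nonneg (mul_nonneg (by linarith) (by linarith)) (by linarith)
      have hid2 : 2*(2*(a*b^2 - 2*b*D^2 - 2*b*E^2) - (a*b + 4*D*E)*(a + b - 2*D - 2*E))
          = 2*a*(b-a)^2 + 8*(D+E)*(a-(D+E))*(b-a) + (a-2*D)*(a-2*E)*(2*(b-a)+4*(D+E)) := by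
        ring
      linarith
  -- P1 = b(ab - 2D²) - 4DEF - 2aF² - 2bE² ≥ 0 :
  -- 2*P1 = 2*s1 + s2 + hG  (check identity)
  have hid3 : 2*(b*(a*b - 2*D^2) - 4*D*E*F - 2*a*F^2 - 2*b*E^2) =
      2*(a*F*(b - 2*F)) + ((a*b + 4*D*E)*((a + b - 2*D - 2*E) - 2*F))
      + (2*(a*b^2 - 2*b*D^2 - 2*b*E^2) - (a*b + 4*D*E)*(a + b - 2*D - 2*E)) := by ring
  have hP1 : 0 ≤ b*(a*b - 2*D^2) - 4*D*E*F - 2*a*F^2 - 2*b*E^2 := by linarith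
  have h4 : 0 ≤ (c - b)*(a*b - 2*D^2) := by
    have h5 : 0 ≤ a*b - 2*D^2 := by nlinarith
    exact mul_nonneg (by linarith) h5
  have hfin : a*b*c + (b*(a*b - 2*D^2) - 4*D*E*F - 2*a*F^2 - 2*b*E^2)
      + (c - b)*(a*b - 2*D^2) = 2 := by linear_combination 2*hdet'
  linarith



/-- sorted reduced sign-normalized base case -/
lemma base_sorted {a b c d e f : ℤ} (ha : 1 ≤ a) (hab : a ≤ b) (hbc : b ≤ c)
    (hd1 : 2*|d| ≤ a) (he1 : 2*|e| ≤ a) (hf1 : 2*|f| ≤ b)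
    (hsign : (0 ≤ d ∧ 0 ≤ e ∧ 0 ≤ f) ∨ (d ≤ 0 ∧ e ≤ 0 ∧ f ≤ 0 ∧ 0 ≤ a + b + 2*(d+e+f)))
    (hdet : a*b*c + 2*d*e*f - a*f^2 - b*e^2 - c*d^2 = 1) :
    a = 1 ∧ b = 1 ∧ c = 1 ∧ d = 0 ∧ e = 0 ∧ f = 0 := by
  have habs : a*b*c ≤ 2 := by
    rcases hsign with ⟨h1, h2, h3⟩ | ⟨h1, h2, h3, h4⟩
    · exact redI ha hab hbc h1 h2 h3 (by rwa [abs_of_nonneg h1] at hd1)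
        (by rwa [abs_of_nonneg h2] at he1) (by rwa [abs_of_nonneg h3] at hf1) hdet
    · exact redII ha hab hbc h1 h2 h3 (by rwa [abs_of_nonpos h1] at hd1)
        (by rwa [abs_of_nonpos h2] at he1) (by rwa [abs_of_nonpos h3] at hf1) h4 hdet
  have ha1 : a = 1 := by
    by_contra h
    have h2a : 2 ≤ a := by omega
    have h2b : 2 ≤ b := le_trans h2a hab
    have h2c : 2 ≤ c := le_trans h2b hbc
    have p1 : 4 ≤ a*b := by nlinarith
    have p2 : 8 ≤ a*b*c := by nlinarith
    linarith
  subst ha1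
  have hd0 : d = 0 := by
    have h0 := abs_nonneg d
    have : |d| = 0 := by omega
    exact abs_eq_zero.mp this
  have he0 : e = 0 := by
    have h0 := abs_nonneg e
    have : |e| = 0 := by omega
    exact abs_eq_zero.mp this
  have hb1 : b = 1 := by
    by_contra h
    have h2b : 2 ≤ b := by omega
    have h2c : 2 ≤ c := le_trans h2b hbc
    have p2 : 4 ≤ 1*b*c := by nlinarith
    linarith
  subst hb1
  have hf0 : f = 0 := by
    have h0 := abs_nonneg f
    have : |f| = 0 := by omega
    exact abs_eq_zero.mp this
  subst hd0; subst he0; subst hf0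
  have hc1 : c = 1 := by linarith [hdet]
  exact ⟨rfl, rfl, hc1, rfl, rfl, rfl⟩

/-- unsorted base case: full min-box conditions + sign normalization (with all pair
conditions in the nonpos case) imply the form is the identity. -/
lemma base_any {a b c d e f : ℤ} (ha : 1 ≤ a) (hb : 1 ≤ b) (hc : 1 ≤ c)
    (hd1 : 2*|d| ≤ a) (hd2 : 2*|d| ≤ b) (he1 : 2*|e| ≤ a) (he2 : 2*|e| ≤ c)
    (hf1 : 2*|f| ≤ b) (hf2 : 2*|f| ≤ c)
    (hsign : (0 ≤ d ∧ 0 ≤ e ∧ 0 ≤ f) ∨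
      (d ≤ 0 ∧ e ≤ 0 ∧ f ≤ 0 ∧ 0 ≤ a + b + 2*(d+e+f) ∧ 0 ≤ a + c + 2*(d+e+f)
        ∧ 0 ≤ b + c + 2*(d+e+f)))
    (hdet : a*b*c + 2*d*e*f - a*f^2 - b*e^2 - c*d^2 = 1) :
    a = 1 ∧ b = 1 ∧ c = 1 ∧ d = 0 ∧ e = 0 ∧ f = 0 := by
  -- six orderings; in each, apply base_sorted to a permuted tuple.
  rcases le_total a b with h1 | h1
  · rcases le_total b c with h2 | h2
    · -- a ≤ b ≤ c : identity permutation
      exact base_sorted ha h1 h2 hd1 he1 hf1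
        (hsign.imp id (fun ⟨x1,x2,x3,x4,_,_⟩ => ⟨x1,x2,x3,x4⟩)) hdet
    · rcases le_total a c with h3 | h3
      · -- a ≤ c ≤ b : permuted tuple (a,c,b,e,d,f)
        have := base_sorted ha h3 h2 he1 hd1 hf2
          (hsign.imp (fun ⟨x1,x2,x3⟩ => ⟨x2,x1,x3⟩)
            (fun ⟨x1,x2,x3,_,x5,_⟩ => ⟨x2,x1,x3, by linarith⟩))
          (by linarith [hdet] : a*c*b + 2*e*d*f - a*f^2 - c*d^2 - b*e^2 = 1)
        tauto
      · -- c ≤ a ≤ b : tuple (c,a,b,e,f,d)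
        have := base_sorted hc h3 h1 he2 hf2 hd1
          (hsign.imp (fun ⟨x1,x2,x3⟩ => ⟨x2,x3,x1⟩)
            (fun ⟨x1,x2,x3,_,_,x6⟩ => ⟨x2,x3,x1, by linarith⟩))
          (by linarith [hdet] : c*a*b + 2*e*f*d - c*d^2 - a*f^2 - b*e^2 = 1)
        tauto
  · rcases le_total a c with h2 | h2
    · -- b ≤ a ≤ c : tuple (b,a,c,d,f,e)
      have := base_sorted hb h1 h2 hd2 hf1 he1
        (hsign.imp (fun ⟨x1,x2,x3⟩ => ⟨x1,x3,x2⟩)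
          (fun ⟨x1,x2,x3,x4,_,_⟩ => ⟨x1,x3,x2, by linarith⟩))
        (by linarith [hdet] : b*a*c + 2*d*f*e - b*e^2 - a*f^2 - c*d^2 = 1)
      tauto
    · rcases le_total b c with h3 | h3
      · -- b ≤ c ≤ a : tuple (b,c,a,f,d,e)
        have := base_sorted hb h3 h2 hf1 hd2 he2
          (hsign.imp (fun ⟨x1,x2,x3⟩ => ⟨x3,x1,x2⟩)
            (fun ⟨x1,x2,x3,_,_,x6⟩ => ⟨x3,x1,x2, by linarith⟩))
          (by linarith [hdet] : b*c*a + 2*f*d*e - b*e^2 - c*d^2 - a*f^2 = 1)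
        tauto
      · -- c ≤ b ≤ a : tuple (c,b,a,f,e,d)
        have := base_sorted hc h3 h1 hf2 he2 hd2
          (hsign.imp (fun ⟨x1,x2,x3⟩ => ⟨x3,x2,x1⟩)
            (fun ⟨x1,x2,x3,_,x5,_⟩ => ⟨x3,x2,x1, by linarith⟩))
          (by linarith [hdet] : c*b*a + 2*f*e*d - c*d^2 - b*e^2 - a*f^2 = 1)
        tauto



def Q3 (a b c d e f x y z : ℤ) : ℤ :=
  a*x^2 + b*y^2 + c*z^2 + 2*d*x*y + 2*e*x*z + 2*f*y*z

def PosT (a b c d e f : ℤ) : Prop :=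
  ∀ x y z : ℤ, ¬(x = 0 ∧ y = 0 ∧ z = 0) → 0 < Q3 a b c d e f x y z

lemma posT_diag {a b c d e f : ℤ} (h : PosT a b c d e f) :
    1 ≤ a ∧ 1 ≤ b ∧ 1 ≤ c := by
  refine ⟨?_, ?_, ?_⟩
  · have := h 1 0 0 (by simp); unfold Q3 at this; nlinarith
  · have := h 0 1 0 (by simp); unfold Q3 at this; nlinarith
  · have := h 0 0 1 (by simp); unfold Q3 at this; nlinarith

/-- identity form is good -/
lemma good_id : good 1 1 1 0 0 0 :=
  ⟨1,0,0,0,1,0,0,0,1, by norm_num, by norm_num, by norm_num, by norm_num, by norm_num, by norm_num⟩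

/-- endgame: all box conditions hold, signs normalized -/
lemma endgame (N : ℕ)
    (ih : ∀ a b c d e f : ℤ, (a+b+c).toNat ≤ N → PosT a b c d e f →
      a*b*c + 2*d*e*f - a*f^2 - b*e^2 - c*d^2 = 1 → good a b c d e f)
    {a b c d e f : ℤ} (hN : (a+b+c).toNat ≤ N + 1)
    (hpos : PosT a b c d e f)
    (hdet : a*b*c + 2*d*e*f - a*f^2 - b*e^2 - c*d^2 = 1)
    (hd1 : 2*|d| ≤ a) (hd2 : 2*|d| ≤ b) (he1 : 2*|e| ≤ a) (he2 : 2*|e| ≤ c)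
    (hf1 : 2*|f| ≤ b) (hf2 : 2*|f| ≤ c)
    (hsign : (0 ≤ d ∧ 0 ≤ e ∧ 0 ≤ f) ∨ (d ≤ 0 ∧ e ≤ 0 ∧ f ≤ 0)) :
    good a b c d e f := by
  obtain ⟨ha, hb, hc⟩ := posT_diag hpos
  rcases hsign with h | h
  · obtain ⟨h1,h2,h3,h4,h5,h6⟩ := base_any ha hb hc hd1 hd2 he1 he2 hf1 hf2 (Or.inl h) hdet
    subst h1; subst h2; subst h3; subst h4; subst h5; subst h6; exact good_id
  · obtain ⟨hd0, he0, hf0⟩ := h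
    rcases lt_or_ge (a + b + 2*(d+e+f)) 0 with hab | hab
    · -- skew_c move : c' = a+b+c+2d+2e+2f < c
      refine good_skew_c (ih _ _ _ _ _ _ ?_ ?_ ?_)
      · omega
      · intro x y z hxyz
        have hq : Q3 a b (a+b+c+2*d+2*e+2*f) d (a+d+e) (b+d+f) x y z
            = Q3 a b c d e f (x+z) (y+z) z := by unfold Q3; ring
        rw [hq]; exact hpos _ _ _ (by omega)
      · linear_combination hdet
    · rcases lt_or_ge (a + c + 2*(d+e+f)) 0 with hac | hac
      · refine good_skew_b (ih _ _ _ _ _ _ ?_ ?_ ?_)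
        · omega
        · intro x y z hxyz
          have hq : Q3 a (a+b+c+2*d+2*e+2*f) c (a+d+e) e (c+e+f) x y z
              = Q3 a b c d e f (x+y) y (z+y) := by unfold Q3; ring
          rw [hq]; exact hpos _ _ _ (by omega)
        · linear_combination hdet
      · rcases lt_or_ge (b + c + 2*(d+e+f)) 0 with hbc | hbc
        · refine good_skew_a (ih _ _ _ _ _ _ ?_ ?_ ?_)
          · omega
          · intro x y z hxyz
            have hq : Q3 (a+b+c+2*d+2*e+2*f) b c (b+d+f) (c+e+f) f x y z
                = Q3 a b c d e f x (y+x) (z+x) := by unfold Q3; ring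
            rw [hq]; exact hpos _ _ _ (by omega)
          · linear_combination hdet
        · obtain ⟨h1,h2,h3,h4,h5,h6⟩ := base_any ha hb hc hd1 hd2 he1 he2 hf1 hf2
            (Or.inr ⟨hd0, he0, hf0, hab, hac, hbc⟩) hdet
          subst h1; subst h2; subst h3; subst h4; subst h5; subst h6; exact good_id

theorem good_of_posdet : ∀ N : ℕ, ∀ a b c d e f : ℤ, (a+b+c).toNat ≤ N →
    PosT a b c d e f → a*b*c + 2*d*e*f - a*f^2 - b*e^2 - c*d^2 = 1 →
    good a b c d e f := by
  intro N
  induction N with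
  | zero =>
    intro a b c d e f hN hpos _
    obtain ⟨ha, hb, hc⟩ := posT_diag hpos
    exfalso; omega
  | succ N ih =>
    intro a b c d e f hN hpos hdet
    obtain ⟨ha, hb, hc⟩ := posT_diag hpos
    -- box reduction, six cases
    rcases lt_or_ge a (2*|d|) with h | hd1
    · -- reduce b using a
      set k : ℤ := if 0 ≤ d then -1 else 1 with hk
      have hb' : a*k^2 + 2*d*k + b = a + b - 2*|d| := by
        rcases le_or_gt 0 d with h0 | h0
        · rw [hk, if_pos h0, abs_of_nonneg h0]; ring
        · rw [hk, if_neg (not_le.mpr h0), abs_of_neg h0]; ring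
      refine good_shear_b k (ih _ _ _ _ _ _ ?_ ?_ ?_)
      · rw [hb']; have := abs_nonneg d; omega
      · intro x y z hxyz
        have hq : Q3 a (a*k^2 + 2*d*k + b) c (d + a*k) e (f + e*k) x y z
            = Q3 a b c d e f (x + k*y) y z := by unfold Q3; ring
        rw [hq]
        refine hpos _ _ _ ?_
        rintro ⟨h1, h2, h3⟩
        exact hxyz ⟨by rw [h2, mul_zero, add_zero] at h1; exact h1, h2, h3⟩
      · linear_combination hdet
    · rcases lt_or_ge b (2*|d|) with h | hd2
      · -- reduce a using b
        set k : ℤ := if 0 ≤ d then -1 else 1 with hk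
        have hb' : b*k^2 + 2*d*k + a = b + a - 2*|d| := by
          rcases le_or_gt 0 d with h0 | h0
          · rw [hk, if_pos h0, abs_of_nonneg h0]; ring
          · rw [hk, if_neg (not_le.mpr h0), abs_of_neg h0]; ring
        refine good_shear_a k (ih _ _ _ _ _ _ ?_ ?_ ?_)
        · rw [hb']; have := abs_nonneg d; omega
        · intro x y z hxyz
          have hq : Q3 (b*k^2 + 2*d*k + a) b c (d + b*k) (e + f*k) f x y z
              = Q3 a b c d e f x (y + k*x) z := by unfold Q3; ring
          rw [hq]
          refine hpos _ _ _ ?_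
          rintro ⟨h1, h2, h3⟩
          exact hxyz ⟨h1, by rw [h1, mul_zero, add_zero] at h2; exact h2, h3⟩
        · linear_combination hdet
      · rcases lt_or_ge a (2*|e|) with h | he1
        · -- reduce c using a
          set k : ℤ := if 0 ≤ e then -1 else 1 with hk
          have hb' : a*k^2 + 2*e*k + c = a + c - 2*|e| := by
            rcases le_or_gt 0 e with h0 | h0
            · rw [hk, if_pos h0, abs_of_nonneg h0]; ring
            · rw [hk, if_neg (not_le.mpr h0), abs_of_neg h0]; ring
          refine good_shear_c1 k (ih _ _ _ _ _ _ ?_ ?_ ?_)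
          · rw [hb']; have := abs_nonneg e; omega
          · intro x y z hxyz
            have hq : Q3 a b (a*k^2 + 2*e*k + c) d (e + a*k) (f + d*k) x y z
                = Q3 a b c d e f (x + k*z) y z := by unfold Q3; ring
            rw [hq]
            refine hpos _ _ _ ?_
            rintro ⟨h1, h2, h3⟩
            exact hxyz ⟨by rw [h3, mul_zero, add_zero] at h1; exact h1, h2, h3⟩
          · linear_combination hdet
        · rcases lt_or_ge c (2*|e|) with h | he2
          · -- reduce a using c
            set k : ℤ := if 0 ≤ e then -1 else 1 with hk
            have hb' : c*k^2 + 2*e*k + a = c + a - 2*|e| := by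
              rcases le_or_gt 0 e with h0 | h0
              · rw [hk, if_pos h0, abs_of_nonneg h0]; ring
              · rw [hk, if_neg (not_le.mpr h0), abs_of_neg h0]; ring
            refine good_shear_a2 k (ih _ _ _ _ _ _ ?_ ?_ ?_)
            · rw [hb']; have := abs_nonneg e; omega
            · intro x y z hxyz
              have hq : Q3 (c*k^2 + 2*e*k + a) b c (d + f*k) (e + c*k) f x y z
                  = Q3 a b c d e f x y (z + k*x) := by unfold Q3; ring
              rw [hq]
              refine hpos _ _ _ ?_
              rintro ⟨h1, h2, h3⟩
              exact hxyz ⟨h1, h2, by rw [h1, mul_zero, add_zero] at h3; exact h3⟩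
            · linear_combination hdet
          · rcases lt_or_ge b (2*|f|) with h | hf1
            · -- reduce c using b
              set k : ℤ := if 0 ≤ f then -1 else 1 with hk
              have hb' : b*k^2 + 2*f*k + c = b + c - 2*|f| := by
                rcases le_or_gt 0 f with h0 | h0
                · rw [hk, if_pos h0, abs_of_nonneg h0]; ring
                · rw [hk, if_neg (not_le.mpr h0), abs_of_neg h0]; ring
              refine good_shear_c2 k (ih _ _ _ _ _ _ ?_ ?_ ?_)
              · rw [hb']; have := abs_nonneg f; omega
              · intro x y z hxyz
                have hq : Q3 a b (b*k^2 + 2*f*k + c) d (e + d*k) (f + b*k) x y z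
                    = Q3 a b c d e f x (y + k*z) z := by unfold Q3; ring
                rw [hq]
                refine hpos _ _ _ ?_
                rintro ⟨h1, h2, h3⟩
                exact hxyz ⟨h1, by rw [h3, mul_zero, add_zero] at h2; exact h2, h3⟩
              · linear_combination hdet
            · rcases lt_or_ge c (2*|f|) with h | hf2
              · -- reduce b using c
                set k : ℤ := if 0 ≤ f then -1 else 1 with hk
                have hb' : c*k^2 + 2*f*k + b = c + b - 2*|f| := by
                  rcases le_or_gt 0 f with h0 | h0
                  · rw [hk, if_pos h0, abs_of_nonneg h0]; ring
                  · rw [hk, if_neg (not_le.mpr h0), abs_of_neg h0]; ring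
                refine good_shear_b2 k (ih _ _ _ _ _ _ ?_ ?_ ?_)
                · rw [hb']; have := abs_nonneg f; omega
                · intro x y z hxyz
                  have hq : Q3 a (c*k^2 + 2*f*k + b) c (d + e*k) e (f + c*k) x y z
                      = Q3 a b c d e f x y (z + k*y) := by unfold Q3; ring
                  rw [hq]
                  refine hpos _ _ _ ?_
                  rintro ⟨h1, h2, h3⟩
                  exact hxyz ⟨h1, h2, by rw [h2, mul_zero, add_zero] at h3; exact h3⟩
                · linear_combination hdet
              · -- all box conditions hold. Normalize signs.
                rcases le_total 0 d with hd0 | hd0 <;> rcases le_total 0 e with he0 | he0 <;>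
                  rcases le_total 0 f with hf0 | hf0
                · exact endgame N ih hN hpos hdet hd1 hd2 he1 he2 hf1 hf2 (Or.inl ⟨hd0, he0, hf0⟩)
                · -- (+,+,-) : flip_x → all ≤ 0
                  refine good_flip_x (endgame N ih (by omega) ?_ (by linear_combination hdet)
                    (by rwa [abs_neg]) (by rwa [abs_neg]) (by rwa [abs_neg]) (by rwa [abs_neg])
                    hf1 hf2 (Or.inr ⟨by omega, by omega, hf0⟩))
                  intro x y z hxyz
                  have hq : Q3 a b c (-d) (-e) f x y z = Q3 a b c d e f (-x) y z := by
                    unfold Q3; ring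
                  rw [hq]; exact hpos _ _ _ (by omega)
                · -- (+,-,+) : flip_y → all ≤ 0
                  refine good_flip_y (endgame N ih (by omega) ?_ (by linear_combination hdet)
                    (by rwa [abs_neg]) (by rwa [abs_neg]) he1 he2
                    (by rwa [abs_neg]) (by rwa [abs_neg]) (Or.inr ⟨by omega, he0, by omega⟩))
                  intro x y z hxyz
                  have hq : Q3 a b c (-d) e (-f) x y z = Q3 a b c d e f x (-y) z := by
                    unfold Q3; ring
                  rw [hq]; exact hpos _ _ _ (by omega)
                · -- (+,-,-) : flip_z → all ≥ 0
                  refine good_flip_z (endgame N ih (by omega) ?_ (by linear_combination hdet)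
                    hd1 hd2 (by rwa [abs_neg]) (by rwa [abs_neg])
                    (by rwa [abs_neg]) (by rwa [abs_neg]) (Or.inl ⟨hd0, by omega, by omega⟩))
                  intro x y z hxyz
                  have hq : Q3 a b c d (-e) (-f) x y z = Q3 a b c d e f x y (-z) := by
                    unfold Q3; ring
                  rw [hq]; exact hpos _ _ _ (by omega)
                · -- (-,+,+) : flip_z → all ≤ 0
                  refine good_flip_z (endgame N ih (by omega) ?_ (by linear_combination hdet)
                    hd1 hd2 (by rwa [abs_neg]) (by rwa [abs_neg])
                    (by rwa [abs_neg]) (by rwa [abs_neg]) (Or.inr ⟨hd0, by omega, by omega⟩))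
                  intro x y z hxyz
                  have hq : Q3 a b c d (-e) (-f) x y z = Q3 a b c d e f x y (-z) := by
                    unfold Q3; ring
                  rw [hq]; exact hpos _ _ _ (by omega)
                · -- (-,+,-) : flip_y → all ≥ 0
                  refine good_flip_y (endgame N ih (by omega) ?_ (by linear_combination hdet)
                    (by rwa [abs_neg]) (by rwa [abs_neg]) he1 he2
                    (by rwa [abs_neg]) (by rwa [abs_neg]) (Or.inl ⟨by omega, he0, by omega⟩))
                  intro x y z hxyz
                  have hq : Q3 a b c (-d) e (-f) x y z = Q3 a b c d e f x (-y) z := by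
                    unfold Q3; ring
                  rw [hq]; exact hpos _ _ _ (by omega)
                · -- (-,-,+) : flip_x → all ≥ 0
                  refine good_flip_x (endgame N ih (by omega) ?_ (by linear_combination hdet)
                    (by rwa [abs_neg]) (by rwa [abs_neg]) (by rwa [abs_neg]) (by rwa [abs_neg])
                    hf1 hf2 (Or.inl ⟨by omega, by omega, hf0⟩))
                  intro x y z hxyz
                  have hq : Q3 a b c (-d) (-e) f x y z = Q3 a b c d e f (-x) y z := by
                    unfold Q3; ring
                  rw [hq]; exact hpos _ _ _ (by omega)
                · exact endgame N ih hN hpos hdet hd1 hd2 he1 he2 hf1 hf2 (Or.inr ⟨hd0, he0, hf0⟩)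



/-- If n(gt-u²) - t = 1 with n ≥ 2, g,t ≥ 1 then n is a sum of three squares. -/
lemma sum3sq_of_form (n g t u : ℤ) (hn : 2 ≤ n) (hg : 1 ≤ g) (ht : 1 ≤ t)
    (hdet : n*(g*t - u^2) - t = 1) : ∃ x y z : ℤ, n = x^2 + y^2 + z^2 := by
  have hng : 1 ≤ n*g - 1 := by nlinarith
  have hpos : PosT n g t 1 0 (-u) := by
    intro x y z hxyz
    have key : n*(n*g-1)*(Q3 n g t 1 0 (-u) x y z)
        = (n*g-1)*(n*x+y)^2 + ((n*g-1)*y - n*u*z)^2 + n*z^2 := by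
      unfold Q3; linear_combination (n*z^2) * hdet
    have h1 : 0 < n*(n*g-1) := by positivity
    rcases lt_or_ge 0 (Q3 n g t 1 0 (-u) x y z) with h | h
    · exact h
    · exfalso
      have h2 : n*(n*g-1)*(Q3 n g t 1 0 (-u) x y z) ≤ 0 :=
        mul_nonpos_of_nonneg_of_nonpos (by positivity) h
      -- RHS > 0 since (x,y,z) ≠ 0
      have hz : 0 ≤ (n*g-1)*(n*x+y)^2 := by positivity
      have hy : 0 ≤ ((n*g-1)*y - n*u*z)^2 := by positivity
      have hx : 0 ≤ n*z^2 := by positivity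
      rcases Decidable.em (z = 0) with hz0 | hz0
      · rcases Decidable.em (y = 0) with hy0 | hy0
        · have hx0 : x ≠ 0 := fun h => hxyz ⟨h, hy0, hz0⟩
          have : 0 < (n*g-1)*(n*x+y)^2 := by
            have : n*x + y ≠ 0 := by
              rw [hy0, add_zero]
              exact mul_ne_zero (by omega) hx0
            positivity
          linarith [key, hy, hx]
        · have : 0 < ((n*g-1)*y - n*u*z)^2 := by
            have : (n*g-1)*y - n*u*z ≠ 0 := by
              rw [hz0, mul_zero, sub_zero]
              exact mul_ne_zero (by omega) hy0
            positivity
          linarith [key, hz, hx]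
      · have : 0 < n*z^2 := by positivity
        linarith [key, hz, hy]
  obtain ⟨p1,p2,p3,_,_,_,_,_,_,h1,_⟩ :=
    good_of_posdet (n+g+t).toNat n g t 1 0 (-u) le_rfl hpos
      (by linear_combination hdet)
  exact ⟨p1,p2,p3,h1⟩



open scoped NumberTheorySymbols in
lemma case_three_mod_eight (n : ℕ) (h8 : n % 8 = 3) :
    ∃ x y z : ℤ, (n : ℤ) = x^2 + y^2 + z^2 := by
  have hn3 : 3 ≤ n := by omega
  have hnodd : Odd n := by rw [Nat.odd_iff]; omega
  set c0 := (n - 1) / 2 with hc0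
  have hc0n : 2 * c0 + 1 = n := by omega
  have hcop2 : Nat.Coprime 2 n := Nat.coprime_two_left.mpr hnodd
  have hcop4 : Nat.Coprime 4 n := by
    have h4 : (4 : ℕ) = 2^2 := by norm_num
    rw [h4]; exact hcop2.pow_left 2
  have hcopc0 : Nat.Coprime c0 n := by
    have h1 : Nat.gcd c0 n ∣ c0 := Nat.gcd_dvd_left _ _
    have h2 : Nat.gcd c0 n ∣ n := Nat.gcd_dvd_right _ _
    have h3 : Nat.gcd c0 n ∣ 1 := by
      have h4 : Nat.gcd c0 n ∣ n - 2 * c0 := Nat.dvd_sub h2 (Dvd.dvd.mul_left h1 2)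
      simpa [show n - 2*c0 = 1 by omega] using h4
    exact Nat.eq_one_of_dvd_one h3
  obtain ⟨k, hk4, hkn⟩ := Nat.chineseRemainder hcop4 1 c0
  have e4 : k % 4 = 1 := by have := hk4; unfold Nat.ModEq at this; omega
  have ekn : k % n = c0 % n := hkn
  have hkcop : Nat.Coprime k (4 * n) := by
    have h1 : Nat.Coprime k 4 := by
      rw [Nat.coprime_comm]
      unfold Nat.Coprime
      rw [Nat.gcd_rec 4 k, e4]
      norm_num
    have h2 : Nat.Coprime k n := by
      have h5 : Nat.Coprime n k := by
        unfold Nat.Coprime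
        rw [Nat.gcd_rec n k, ekn, ← Nat.gcd_rec n c0]
        exact Nat.coprime_comm.mp hcopc0
      exact Nat.coprime_comm.mp h5
    exact Nat.Coprime.mul_right h1 h2
  haveI : NeZero (4 * n) := ⟨by omega⟩
  have hunit : IsUnit ((k : ℕ) : ZMod (4 * n)) := (ZMod.isUnit_iff_coprime k (4*n)).mpr hkcop
  obtain ⟨q, hq_gt, hq_prime, hq_mod⟩ := Nat.forall_exists_prime_gt_and_eq_mod hunit (4*n + n^2)
  haveI : Fact q.Prime := ⟨hq_prime⟩
  have hqM : q ≡ k [MOD 4*n] := (ZMod.natCast_eq_natCast_iff q k (4*n)).mp hq_mod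
  have hq4 : q % 4 = 1 := by
    have h1 : q ≡ k [MOD 4] := Nat.ModEq.of_dvd ⟨n, rfl⟩ hqM
    unfold Nat.ModEq at h1; omega
  have hqn : q % n = c0 := by
    have h1 : q ≡ k [MOD n] := Nat.ModEq.of_dvd ⟨4, by ring⟩ hqM
    unfold Nat.ModEq at h1
    have : c0 % n = c0 := Nat.mod_eq_of_lt (by omega)
    omega
  have hq2 : q % 2 = 1 := by omega
  have hqbig : 4*n + n^2 < q := hq_gt
  have hdvd : n ∣ 2*q + 1 := by
    have h1 : q ≡ c0 [MOD n] := by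
      unfold Nat.ModEq
      rw [hqn]
      exact (Nat.mod_eq_of_lt (by omega)).symm
    have h2 : 2*q + 1 ≡ 2*c0 + 1 [MOD n] := (h1.mul_left 2).add_right 1
    have h3 : 2*q + 1 ≡ 0 [MOD n] := by
      rw [hc0n] at h2
      exact h2.trans (Nat.modEq_zero_iff_dvd.mpr dvd_rfl)
    exact Nat.modEq_zero_iff_dvd.mp h3
  set D := (2*q+1)/n with hDdef
  have hD : n * D = 2*q+1 := Nat.mul_div_cancel' hdvd
  have hD1 : 1 ≤ D := by
    rcases Nat.eq_zero_or_pos D with h | h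
    · rw [h, Nat.mul_zero] at hD; omega
    · exact h
  have hDodd : Odd D := by
    have h1 : Odd (n * D) := by rw [hD]; exact ⟨q, by ring⟩
    exact (Nat.odd_mul.mp h1).2
  -- Jacobi computations
  have hχ4n : ZMod.χ₄ n = -1 := ZMod.χ₄_nat_three_mod_four (by omega)
  have hχ8n : ZMod.χ₈ n = -1 := by
    rw [ZMod.χ₈_nat_eq_if_mod_eight]
    have h2 : n % 2 = 1 := by omega
    simp [h8, h2]
  have hJ2 : J((2 : ℤ) | n) = -1 := by rw [jacobiSym.at_two hnodd]; exact hχ8n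
  have hJneg1 : J((-1 : ℤ) | n) = -1 := by rw [jacobiSym.at_neg_one hnodd]; exact hχ4n
  have hJ2c0 : J(((2*c0 : ℕ) : ℤ) | n) = -1 := by
    have h9 : ((2*c0 : ℕ) : ℤ) ≡ (-1 : ℤ) [ZMOD (n:ℕ)] :=
      Int.ModEq.symm (Int.modEq_iff_dvd.mpr ⟨1, by push_cast; omega⟩)
    rw [jacobiSym.mod_left' h9]
    exact hJneg1
  have hJc0 : J((c0 : ℤ) | n) = 1 := by
    have h1 : J(((2*c0 : ℕ) : ℤ) | n) = J((2:ℤ) | n) * J((c0 : ℤ) | n) := by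
      rw [show ((2*c0 : ℕ) : ℤ) = (2:ℤ) * (c0 : ℤ) by push_cast; ring]
      exact jacobiSym.mul_left 2 c0 n
    rw [hJ2c0, hJ2] at h1; linarith
  have hJq : J((q : ℤ) | n) = 1 := by
    have h9 : ((q : ℕ) : ℤ) % n = ((c0 : ℕ) : ℤ) % n := by
      rw [← Int.natCast_mod q n, ← Int.natCast_mod c0 n, hqn, Nat.mod_eq_of_lt (by omega)]
    rw [jacobiSym.mod_left' h9]
    exact hJc0
  have hJnq : J((n : ℤ) | q) = 1 := by
    have := jacobiSym.quadratic_reciprocity_one_mod_four hq4 hnodd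
    rw [← this]; exact hJq
  have hχ4q : ZMod.χ₄ q = 1 := ZMod.χ₄_nat_one_mod_four hq4
  have hqodd : Odd q := by rw [Nat.odd_iff]; omega
  have hJD : J((-(D:ℤ)) | q) = 1 := by
    have h1 : J((-(D:ℤ)) * (n:ℤ) | q) = J((-(D:ℤ)) | q) * J((n : ℤ) | q) :=
      jacobiSym.mul_left _ _ q
    have h2 : J((-(D:ℤ)) * (n:ℤ) | q) = J((-1 : ℤ) | q) := by
      apply jacobiSym.mod_left'
      have hDn : (n : ℤ) * D = 2*(q:ℤ)+1 := by exact_mod_cast hD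
      have h10 : (-(D:ℤ)) * (n:ℤ) = -(2*(q:ℤ)+1) := by rw [← hDn]; ring
      rw [h10]
      exact Int.ModEq.symm (Int.modEq_iff_dvd.mpr ⟨-2, by push_cast; ring⟩)
    have h3 : J((-1 : ℤ) | q) = 1 := by rw [jacobiSym.at_neg_one hqodd]; exact hχ4q
    rw [h2, h3, hJnq, mul_one] at h1; linarith
  -- extract square root
  have hsq : IsSquare ((-(D:ℤ) : ℤ) : ZMod q) := ZMod.isSquare_of_jacobiSym_eq_one hJD
  obtain ⟨s, hs⟩ := hsq
  set u0 := s.val with hu0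
  have hscast : ((u0 : ℕ) : ZMod q) = s := ZMod.natCast_rightInverse s
  set u : ℤ := if u0 % 2 = 1 then (u0 : ℤ) else (u0 : ℤ) + q with hu
  have huodd : u % 2 = 1 := by
    rcases Nat.eq_zero_or_pos (u0 % 2) with h | h
    · rw [hu, if_neg (by omega)]; omega
    · rw [hu, if_pos (by omega)]; omega
  have hucast : ((u : ℤ) : ZMod q) = s := by
    rcases Nat.eq_zero_or_pos (u0 % 2) with h | h
    · rw [hu, if_neg (by omega)]
      push_cast
      rw [hscast, ZMod.natCast_self, add_zero]
    · rw [hu, if_pos (by omega)]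
      push_cast
      rw [hscast]
  have hqdvd : (q:ℤ) ∣ u^2 + D := by
    rw [← ZMod.intCast_zmod_eq_zero_iff_dvd]
    push_cast
    rw [hucast, pow_two, ← hs]
    push_cast
    ring
  obtain ⟨g0, hg0⟩ := hqdvd
  have hg0even : Even g0 := by
    have h1 : Even (u^2 + (D:ℤ)) := by
      have : Odd (u^2) := by
        have : Odd u := Int.odd_iff.mpr huodd
        exact this.pow
      have hDo : Odd (D:ℤ) := by exact_mod_cast hDodd
      rcases this with ⟨i, hi⟩; rcases hDo with ⟨j, hj⟩
      exact ⟨i+j+1, by omega⟩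
    rw [hg0] at h1
    rcases Int.even_mul.mp h1 with h | h
    · exfalso; rcases h with ⟨i, hi⟩; omega
    · exact h
  obtain ⟨g, hg⟩ := hg0even
  rw [hg] at hg0
  have hDpos : (0:ℤ) < D := by exact_mod_cast hD1
  have hq0 : (0:ℤ) < q := by exact_mod_cast hq_prime.pos
  have hgpos : 1 ≤ g := by
    rcases lt_or_ge g 1 with h | h
    · exfalso
      have h1 : (q:ℤ) * (g + g) ≤ 0 :=
        mul_nonpos_of_nonneg_of_nonpos hq0.le (by omega)
      nlinarith [sq_nonneg u]
    · exact h
  refine sum3sq_of_form n g (2*q) u (by omega) hgpos (by omega) ?_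
  have hDn : (n : ℤ) * D = 2*(q:ℤ)+1 := by exact_mod_cast hD
  have hgD : g * (2*(q:ℤ)) - u^2 = D := by linear_combination -hg0
  rw [hgD]
  linarith [hDn]

open scoped NumberTheorySymbols in
lemma case_two_mod_eight (n : ℕ) (h8 : n % 8 = 2) :
    ∃ x y z : ℤ, (n : ℤ) = x^2 + y^2 + z^2 := by
  have hn2 : 2 ≤ n := by omega
  set m := n / 2 with hm
  have hnm : n = 2 * m := by omega
  have hm4 : m % 4 = 1 := by omega
  have hmodd : Odd m := by rw [Nat.odd_iff]; omega
  have hm1 : 1 ≤ m := by omega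
  have hcop8m : Nat.Coprime 8 m := by
    have h4 : (8 : ℕ) = 2^3 := by norm_num
    rw [h4]; exact (Nat.coprime_two_left.mpr hmodd).pow_left 3
  obtain ⟨k, hk8, hkm⟩ := Nat.chineseRemainder hcop8m 1 (m - 1)
  have e8 : k % 8 = 1 := by have := hk8; unfold Nat.ModEq at this; omega
  have ekm : k % m = (m-1) % m := hkm
  have hkcop : Nat.Coprime k (8 * m) := by
    have h1 : Nat.Coprime k 8 := by
      rw [Nat.coprime_comm]
      unfold Nat.Coprime
      rw [Nat.gcd_rec 8 k, e8]
      norm_num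
    have h2 : Nat.Coprime k m := by
      have h6 : Nat.Coprime (m-1) m := by
        rcases Nat.eq_zero_or_pos (m-1) with h | h
        · have hm1' : m = 1 := by omega
          rw [h, hm1']
          simp [Nat.Coprime]
        · have ha1 := Nat.gcd_dvd_left (m-1) m
          have ha2 := Nat.gcd_dvd_right (m-1) m
          have ha3 : Nat.gcd (m-1) m ∣ 1 := by
            have ha4 : Nat.gcd (m-1) m ∣ m - (m-1) := Nat.dvd_sub ha2 ha1
            simpa [show m - (m-1) = 1 by omega] using ha4
          exact Nat.eq_one_of_dvd_one ha3
      have h5 : Nat.Coprime m k := by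
        unfold Nat.Coprime
        rw [Nat.gcd_rec m k, ekm, ← Nat.gcd_rec m (m-1)]
        exact Nat.coprime_comm.mp h6
      exact Nat.coprime_comm.mp h5
    exact Nat.Coprime.mul_right h1 h2
  haveI : NeZero (8 * m) := ⟨by omega⟩
  have hunit : IsUnit ((k : ℕ) : ZMod (8 * m)) := (ZMod.isUnit_iff_coprime k (8*m)).mpr hkcop
  obtain ⟨q, hq_gt, hq_prime, hq_mod⟩ := Nat.forall_exists_prime_gt_and_eq_mod hunit (8*m + n^2)
  haveI : Fact q.Prime := ⟨hq_prime⟩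
  have hqM : q ≡ k [MOD 8*m] := (ZMod.natCast_eq_natCast_iff q k (8*m)).mp hq_mod
  have hq8 : q % 8 = 1 := by
    have h1 : q ≡ k [MOD 8] := Nat.ModEq.of_dvd ⟨m, rfl⟩ hqM
    unfold Nat.ModEq at h1; omega
  have hqm : q % m = (m-1) % m := by
    have h1 : q ≡ k [MOD m] := Nat.ModEq.of_dvd ⟨8, by ring⟩ hqM
    unfold Nat.ModEq at h1; omega
  have hq4 : q % 4 = 1 := by omega
  have hq2 : q % 2 = 1 := by omega
  have hqodd : Odd q := by rw [Nat.odd_iff]; omega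
  have hqbig : 8*m + n^2 < q := hq_gt
  have hdvd : n ∣ q + 1 := by
    have hd2 : 2 ∣ q + 1 := by omega
    have hdm : m ∣ q + 1 := by
      have h1 : q ≡ m - 1 [MOD m] := hqm
      have h2 : q + 1 ≡ (m - 1) + 1 [MOD m] := h1.add_right 1
      have h3 : m - 1 + 1 = m := by omega
      rw [h3] at h2
      have h4 : q + 1 ≡ 0 [MOD m] := h2.trans (Nat.modEq_zero_iff_dvd.mpr dvd_rfl)
      exact Nat.modEq_zero_iff_dvd.mp h4
    rw [hnm]
    exact Nat.Coprime.mul_dvd_of_dvd_of_dvd (by norm_num [Nat.coprime_two_left, hmodd]) hd2 hdm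
  set D := (q+1)/n with hDdef
  have hD : n * D = q+1 := Nat.mul_div_cancel' hdvd
  have hD1 : 1 ≤ D := by
    rcases Nat.eq_zero_or_pos D with h | h
    · rw [h, Nat.mul_zero] at hD; omega
    · exact h
  -- Jacobi computations
  have hχ4m : ZMod.χ₄ m = 1 := ZMod.χ₄_nat_one_mod_four hm4
  have hχ8q : ZMod.χ₈ q = 1 := by
    rw [ZMod.χ₈_nat_eq_if_mod_eight]
    have h2 : q % 2 = 1 := hq2
    simp [hq8, h2]
  have hJ2q : J((2 : ℤ) | q) = 1 := by rw [jacobiSym.at_two hqodd]; exact hχ8q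
  have hJneg1m : J((-1 : ℤ) | m) = 1 := by rw [jacobiSym.at_neg_one hmodd]; exact hχ4m
  have hJqm : J((q : ℤ) | m) = 1 := by
    have h9 : ((q : ℕ) : ℤ) ≡ (-1 : ℤ) [ZMOD (m:ℕ)] := by
      refine Int.ModEq.symm (Int.modEq_iff_dvd.mpr ?_)
      have : ((q : ℕ) : ℤ) - (-1) = (q + 1 : ℕ) := by push_cast; ring
      rw [this]
      have hmn : m ∣ n := ⟨2, by omega⟩
      exact Int.natCast_dvd_natCast.mpr (hmn.trans hdvd)
    rw [jacobiSym.mod_left' h9]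
    exact hJneg1m
  have hJmq : J((m : ℤ) | q) = 1 := by
    have := jacobiSym.quadratic_reciprocity_one_mod_four hq4 hmodd
    rw [← this]; exact hJqm
  have hJnq : J((n : ℤ) | q) = 1 := by
    have h1 : ((n:ℕ) : ℤ) = (2:ℤ) * (m:ℤ) := by rw [hnm]; push_cast; ring
    rw [h1, jacobiSym.mul_left, hJ2q, hJmq]
    norm_num
  have hχ4q : ZMod.χ₄ q = 1 := ZMod.χ₄_nat_one_mod_four hq4
  have hJD : J((-(D:ℤ)) | q) = 1 := by
    have h1 : J((-(D:ℤ)) * (n:ℤ) | q) = J((-(D:ℤ)) | q) * J((n : ℤ) | q) :=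
      jacobiSym.mul_left _ _ q
    have h2 : J((-(D:ℤ)) * (n:ℤ) | q) = J((-1 : ℤ) | q) := by
      apply jacobiSym.mod_left'
      have hDn : (n : ℤ) * D = (q:ℤ)+1 := by exact_mod_cast hD
      have h10 : (-(D:ℤ)) * (n:ℤ) = -((q:ℤ)+1) := by rw [← hDn]; ring
      rw [h10]
      exact Int.ModEq.symm (Int.modEq_iff_dvd.mpr ⟨-1, by push_cast; ring⟩)
    have h3 : J((-1 : ℤ) | q) = 1 := by rw [jacobiSym.at_neg_one hqodd]; exact hχ4q
    rw [h2, h3, hJnq, mul_one] at h1; linarith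
  have hsq : IsSquare ((-(D:ℤ) : ℤ) : ZMod q) := ZMod.isSquare_of_jacobiSym_eq_one hJD
  obtain ⟨s, hs⟩ := hsq
  set u : ℤ := (s.val : ℤ) with hu
  have hscast : ((s.val : ℕ) : ZMod q) = s := ZMod.natCast_rightInverse s
  have hucast : ((u : ℤ) : ZMod q) = s := by rw [hu]; push_cast; rw [hscast]
  have hqdvd : (q:ℤ) ∣ u^2 + D := by
    rw [← ZMod.intCast_zmod_eq_zero_iff_dvd]
    push_cast
    rw [hucast, pow_two, ← hs]
    push_cast
    ring
  obtain ⟨g, hg0⟩ := hqdvd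
  have hDpos : (0:ℤ) < D := by exact_mod_cast hD1
  have hq0 : (0:ℤ) < q := by exact_mod_cast hq_prime.pos
  have hgpos : 1 ≤ g := by
    rcases lt_or_ge g 1 with h | h
    · exfalso
      have h1 : (q:ℤ) * g ≤ 0 := mul_nonpos_of_nonneg_of_nonpos hq0.le (by omega)
      nlinarith [sq_nonneg u]
    · exact h
  refine sum3sq_of_form n g q u (by omega) hgpos (by omega) ?_
  have hDn : (n : ℤ) * D = (q:ℤ)+1 := by exact_mod_cast hD
  have hgD : g * (q:ℤ) - u^2 = D := by linear_combination -hg0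
  rw [hgD]
  linarith [hDn]



theorem hurwitz_frogger (a : ℤ) :
    ∃ x y z : ℤ, ∃ p : ℕ, p.Prime ∧ a ^ 2 + x ^ 2 + y ^ 2 + z ^ 2 = p := by
  set b := a.natAbs with hb
  have hab : a^2 = ((b^2 : ℕ) : ℤ) := by
    push_cast
    rw [← sq_abs a, Int.abs_eq_natAbs a]
  have hB : b^2 % 8 = 0 ∨ b^2 % 8 = 1 ∨ b^2 % 8 = 4 := by
    have h1 : b^2 % 8 = (b % 8)^2 % 8 := Nat.pow_mod b 2 8
    have h2 : b % 8 < 8 := Nat.mod_lt _ (by norm_num)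
    interval_cases h : (b % 8) <;> simp [h1] <;> omega
  -- helper to finish given prime p and n := p - b² with a three-square rep
  have finish : ∀ p : ℕ, p.Prime → b^2 < p →
      (∃ x y z : ℤ, ((p - b^2 : ℕ) : ℤ) = x^2 + y^2 + z^2) →
      ∃ x y z : ℤ, ∃ q : ℕ, q.Prime ∧ a ^ 2 + x ^ 2 + y ^ 2 + z ^ 2 = q := by
    intro p hp hlt ⟨x, y, z, hxyz⟩
    refine ⟨x, y, z, p, hp, ?_⟩
    have h3 : ((p - b^2 : ℕ) : ℤ) = (p : ℤ) - ((b^2 : ℕ) : ℤ) := by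
      push_cast [Nat.cast_sub hlt.le]
      ring
    rw [hab]
    rw [h3] at hxyz
    linarith
  rcases hB with hB | hB | hB
  · -- b² ≡ 0 : take p ≡ 3 (mod 8)
    haveI : NeZero (8:ℕ) := ⟨by norm_num⟩
    have hu : IsUnit ((3 : ℕ) : ZMod 8) := by decide
    obtain ⟨p, hgt, hp, hmod⟩ := Nat.forall_exists_prime_gt_and_eq_mod hu (b^2 + 8)
    have hp8 : p % 8 = 3 := by
      have := (ZMod.natCast_eq_natCast_iff p 3 8).mp hmod
      unfold Nat.ModEq at this; omega
    exact finish p hp (by omega) (case_three_mod_eight _ (by omega))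
  · -- b² ≡ 1 : take p ≡ 3 (mod 8), n ≡ 2
    haveI : NeZero (8:ℕ) := ⟨by norm_num⟩
    have hu : IsUnit ((3 : ℕ) : ZMod 8) := by decide
    obtain ⟨p, hgt, hp, hmod⟩ := Nat.forall_exists_prime_gt_and_eq_mod hu (b^2 + 8)
    have hp8 : p % 8 = 3 := by
      have := (ZMod.natCast_eq_natCast_iff p 3 8).mp hmod
      unfold Nat.ModEq at this; omega
    exact finish p hp (by omega) (case_two_mod_eight _ (by omega))
  · -- b² ≡ 4 : take p ≡ 7 (mod 8), n ≡ 3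
    haveI : NeZero (8:ℕ) := ⟨by norm_num⟩
    have hu : IsUnit ((7 : ℕ) : ZMod 8) := by decide
    obtain ⟨p, hgt, hp, hmod⟩ := Nat.forall_exists_prime_gt_and_eq_mod hu (b^2 + 8)
    have hp8 : p % 8 = 7 := by
      have := (ZMod.natCast_eq_natCast_iff p 7 8).mp hmod
      unfold Nat.ModEq at this; omega
    exact finish p hp (by omega) (case_three_mod_eight _ (by omega))
end

section
/- Let n ≥ 1 and let A be the n × n matrix with A(k,l) = 1 if (a + k) + i(b + l) is a Gaussian prime and 0 otherwise, where z = a + bi is a fixed Gaussian integer with a ≥ 0, b ≥ 0 and a + b > 0 even. Let P be the diagonal matrix with entries P(j,j) = (−1)^j. Then PA + AP = 0. -/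
/-!
If `x + y` is even then `1 + i` divides `x + iy`, so a Gaussian prime with `x + y` even is an
associate of `1 + i` and has norm `2`. The points `(a + k + 1, b + l + 1)` have norm greater
than `2`, so `A k l ≠ 0` forces `k + l` to be odd, i.e. `P k k = -P l l`; since `P A` and `A P`
scale the entry `A k l` by `P k k` and by `P l l`, they cancel.
-/

namespace GaussianInt

theorem one_add_I_dvd_of_even_re_add_im {z : GaussianInt} (h : Even (z.re + z.im)) :
    (⟨1, 1⟩ : GaussianInt) ∣ z := by
  obtain ⟨c, hc⟩ := h
  refine ⟨⟨c, c - z.re⟩, ?_⟩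
  ext
  · simp
  · simp; omega

theorem norm_eq_two_of_irreducible_of_even_re_add_im {z : GaussianInt} (hz : Irreducible z)
    (h : Even (z.re + z.im)) : z.norm = 2 := by
  obtain ⟨w, rfl⟩ := one_add_I_dvd_of_even_re_add_im h
  have hw : IsUnit w := (hz.isUnit_or_isUnit rfl).resolve_left fun hu => by
    simpa [Zsqrtd.norm_def] using (Zsqrtd.norm_eq_one_iff' (by norm_num) _).mpr hu
  rw [Zsqrtd.norm_mul, (Zsqrtd.norm_eq_one_iff' (by norm_num) w).mpr hw]
  simp [Zsqrtd.norm_def]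

end GaussianInt

theorem neg_one_pow_add_neg_one_pow_of_odd_add {R : Type*} [Ring R] {m n : ℕ}
    (h : Odd (m + n)) : (-1 : R) ^ m + (-1) ^ n = 0 := by
  rcases Nat.even_or_odd m with hm | hm
  · rw [hm.neg_one_pow, ((Nat.odd_add'.mp h).mpr hm).neg_one_pow, add_neg_cancel]
  · rw [hm.neg_one_pow, ((Nat.odd_add.mp h).mp hm).neg_one_pow, neg_add_cancel]

theorem Matrix.diagonal_mul_add_mul_diagonal_eq_zero {ι R : Type*} [Fintype ι] [DecidableEq ι]
    [NonUnitalNonAssocCommSemiring R] {d : ι → R} {A : Matrix ι ι R}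
    (h : ∀ k l, A k l ≠ 0 → d k + d l = 0) :
    diagonal d * A + A * diagonal d = 0 := by
  ext k l
  rw [add_apply, diagonal_mul, mul_diagonal, mul_comm (d k), ← mul_add, zero_apply]
  by_cases hkl : A k l = 0
  · rw [hkl, zero_mul]
  · rw [h k l hkl, mul_zero]

open scoped Classical in
theorem gaussian_prime_matrix_anticommutes (n : ℕ) (a b : ℤ)
    (ha : 0 ≤ a) (hb : 0 ≤ b) (hpos : 0 < a + b) (heven : Even (a + b))
    (A P : Matrix (Fin n) (Fin n) ℤ)
    (hA : ∀ k l : Fin n,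
      A k l = if Irreducible ((⟨a + ((k : ℕ) + 1), b + ((l : ℕ) + 1)⟩ : GaussianInt))
              then 1 else 0)
    (hP : ∀ j j' : Fin n, P j j' = if j = j' then (-1) ^ ((j : ℕ) + 1) else 0) :
    P * A + A * P = 0 := by
  have hPdiag : P = Matrix.diagonal fun j : Fin n => (-1) ^ ((j : ℕ) + 1) := by
    ext j j'
    rw [hP, Matrix.diagonal_apply]
  subst hPdiag
  refine Matrix.diagonal_mul_add_mul_diagonal_eq_zero fun k l hkl => ?_
  have hprime : Irreducible ((⟨a + ((k : ℕ) + 1), b + ((l : ℕ) + 1)⟩ : GaussianInt)) := by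
    by_contra hnot
    exact hkl (by rw [hA, if_neg hnot])
  have hnorm : (⟨a + ((k : ℕ) + 1), b + ((l : ℕ) + 1)⟩ : GaussianInt).norm ≠ 2 := by
    rw [Zsqrtd.norm_def]
    dsimp only
    nlinarith [(k : ℕ).cast_nonneg (α := ℤ), (l : ℕ).cast_nonneg (α := ℤ)]
  have hodd : ¬Even (a + ((k : ℕ) + 1) + (b + ((l : ℕ) + 1))) := fun h =>
    hnorm (GaussianInt.norm_eq_two_of_irreducible_of_even_re_add_im hprime h)
  apply neg_one_pow_add_neg_one_pow_of_odd_add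
  rw [Int.even_iff] at hodd heven
  rw [Nat.odd_iff]
  omega
end

section
/- The determinant of the n × n greatest common divisor matrix A with A(i,j) = gcd(i,j) equals the product φ(1)·φ(2)···φ(n), where φ is Euler's totient function. -/
open Finset Matrix

lemma smith_key (n g : ℕ) (hg : 0 < g) (hgn : g ≤ n) :
    ∑ k ∈ Finset.range n, (if (k + 1) ∣ g then Nat.totient (k + 1) else 0) = g := by
  rw [← Finset.sum_filter]
  conv_rhs => rw [← Nat.sum_totient g]
  apply Finset.sum_nbij' (fun k => k + 1) (fun d => d - 1)
  · intro k hk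
    simp only [Finset.mem_filter, Finset.mem_range] at hk
    exact Nat.mem_divisors.mpr ⟨hk.2, hg.ne'⟩
  · intro d hd
    rw [Nat.mem_divisors] at hd
    have h1 : 1 ≤ d := Nat.pos_of_dvd_of_pos hd.1 hg
    have hdg : d ≤ g := Nat.le_of_dvd hg hd.1
    simp only [Finset.mem_filter, Finset.mem_range]
    refine ⟨by omega, ?_⟩
    rw [Nat.sub_add_cancel h1]; exact hd.1
  · intro k _; omega
  · intro d hd
    have h1 : 1 ≤ d := Nat.pos_of_mem_divisors hd
    omega
  · intro k _; rfl

theorem smith_determinant (n : ℕ) :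
    (Matrix.of fun i j : Fin n => ((Nat.gcd (i + 1) (j + 1) : ℕ) : ℤ)).det =
      ∏ k ∈ Finset.range n, ((Nat.totient (k + 1) : ℕ) : ℤ) := by
  set B : Matrix (Fin n) (Fin n) ℤ :=
    Matrix.of fun i k : Fin n => if ((k : ℕ) + 1) ∣ ((i : ℕ) + 1) then 1 else 0 with hB
  set D : Matrix (Fin n) (Fin n) ℤ :=
    Matrix.diagonal fun k : Fin n => ((Nat.totient ((k : ℕ) + 1) : ℕ) : ℤ) with hD
  have hmain : (Matrix.of fun i j : Fin n => ((Nat.gcd (i + 1) (j + 1) : ℕ) : ℤ)) =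
      B * D * Bᵀ := by
    ext i j
    rw [Matrix.mul_apply]
    have hterm : ∀ k : Fin n, (B * D) i k * Bᵀ k j =
        ((if ((k : ℕ) + 1) ∣ Nat.gcd ((i : ℕ) + 1) ((j : ℕ) + 1)
          then Nat.totient ((k : ℕ) + 1) else 0 : ℕ) : ℤ) := by
      intro k
      rw [Matrix.mul_diagonal]
      simp only [hB, Matrix.transpose_apply, Matrix.of_apply, Nat.dvd_gcd_iff]
      by_cases h1 : ((k : ℕ) + 1) ∣ ((i : ℕ) + 1) <;>
        by_cases h2 : ((k : ℕ) + 1) ∣ ((j : ℕ) + 1) <;>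
        simp [h1, h2]
    rw [Finset.sum_congr rfl fun k _ => hterm k, ← Nat.cast_sum]
    simp only [Matrix.of_apply]
    congr 1
    rw [Fin.sum_univ_eq_sum_range
      (fun k => if (k + 1) ∣ Nat.gcd ((i : ℕ) + 1) ((j : ℕ) + 1)
        then Nat.totient (k + 1) else 0)]
    refine (smith_key n _ ?_ ?_).symm
    · exact Nat.gcd_pos_of_pos_left _ (Nat.succ_pos _)
    · calc Nat.gcd ((i : ℕ) + 1) ((j : ℕ) + 1) ≤ (i : ℕ) + 1 :=
            Nat.le_of_dvd (Nat.succ_pos _) (Nat.gcd_dvd_left _ _)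
        _ ≤ n := i.2
  have hBtri : B.BlockTriangular OrderDual.toDual := by
    intro i k h
    simp only [OrderDual.toDual_lt_toDual] at h
    simp only [hB, Matrix.of_apply, ite_eq_right_iff]
    intro hdvd
    have := Nat.le_of_dvd (Nat.succ_pos _) hdvd
    omega
  have hBdet : B.det = 1 := by
    rw [Matrix.det_of_lowerTriangular B hBtri]
    simp [hB]
  rw [hmain, Matrix.det_mul, Matrix.det_mul, Matrix.det_transpose, hBdet,
    Matrix.det_diagonal, one_mul, mul_one]
  exact (Finset.prod_range fun k => ((Nat.totient (k + 1) : ℕ) : ℤ)).symm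
end
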